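/- Let G be an extraction grammar in Chomsky Normal Form and d = σ1⋯σn a document. Define the grammar G_d with nonterminals A_{i,j} (1 ≤ i ≤ j ≤ n) and A_ε for each nonterminal A of G, and productions as follows: A_{i,i} → σ_i for each A → σ_i in G; A_ε → τ for each A → τ in G with τ ∈ Γ_X; A_ε → B_ε C_ε, A_{i,j} → B_{i,j} C_ε, A_{i,j} → B_ε C_{i,j} for each A → BC in G; and A_{i,j} → B_{i,i'} C_{i'+1,j} for each A → BC in G and i ≤ i' < j. Then for every nonterminal A of G and every ref-word r with clr(r) = σ_i⋯σ_j: A ⇒*_G r if and only if A_{i,j} ⇒*_{G_d} r. -/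

import Mathlib

/-- A variable operation: `(x, true)` is `⊢x` (open), `(x, false)` is `⊣x` (close). -/
abbrev VarOp (X : Type) : Type := X × Bool

/-- A ref-word: a word over the extended alphabet `Σ ∪ Γ_X`. -/
abbrev RefWord (T X : Type) : Type := List (T ⊕ VarOp X)

/-- The morphism `clr` erasing variable operations and fixing letters of `Σ`. -/
def clr {T X : Type} (r : RefWord T X) : List T :=
  r.filterMap (fun a => match a with | Sum.inl t => some t | Sum.inr _ => none)

/-- A ref-word is valid for `X`: each `⊢x` and `⊣x` occurs exactly once, `⊢x` before `⊣x`. -/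
def ValidRef {T X : Type} (r : RefWord T X) : Prop :=
  ∀ x : X, ∃ u v w : RefWord T X,
    r = u ++ Sum.inr (x, true) :: (v ++ Sum.inr (x, false) :: w) ∧
    ∀ b : Bool, Sum.inr (x, b) ∉ u ∧ Sum.inr (x, b) ∉ v ∧ Sum.inr (x, b) ∉ w

/-- `μ` is the `(X,d)`-mapping `μ^r` induced by the ref-word `r`. -/
def MappingOf {T X : Type} (r : RefWord T X) (μ : X → ℕ × ℕ) : Prop :=
  ∀ x : X, ∃ u v w : RefWord T X,
    r = u ++ Sum.inr (x, true) :: (v ++ Sum.inr (x, false) :: w) ∧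
    μ x = ((clr u).length + 1, (clr u).length + 1 + (clr v).length)

/-- The spanner defined by an extraction grammar (a CFG over `Σ ∪ Γ_X`). -/
def spanner {T X : Type} (G : ContextFreeGrammar (T ⊕ VarOp X)) (d : List T) :
    Set (X → ℕ × ℕ) :=
  {μ | ∃ r : RefWord T X, r ∈ G.language ∧ ValidRef r ∧ clr r = d ∧ MappingOf r μ}

/-- A spanner is context-free if it is definable by an extraction grammar. -/
def IsCFSpanner {T X : Type} (S : List T → Set (X → ℕ × ℕ)) : Prop :=
  ∃ G : ContextFreeGrammar.{0} (T ⊕ VarOp X), ∀ d : List T, S d = spanner G d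

/-- A grammar is in Chomsky Normal Form: every rule is `A → BC` or `A → a`. -/
def InCNF {U : Type} (G : ContextFreeGrammar U) : Prop :=
  ∀ r ∈ G.rules,
    (∃ B C : G.NT, r.output = [Symbol.nonterminal B, Symbol.nonterminal C]) ∨
    (∃ a : U, r.output = [Symbol.terminal a])

open Classical in
/-- The document-adjusted variants of a single CNF rule: `A_{i,i} → σ_i`, `A_ε → τ`,
`A_ε → B_ε C_ε`, `A_{i,j} → B_{i,j} C_ε`, `A_{i,j} → B_ε C_{i,j}`, and
`A_{i,j} → B_{i,i'} C_{i'+1,j}`.  The nonterminal `A_{i,j}` is encoded as `(A, some (i,j))`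
and `A_ε` as `(A, none)`. -/
noncomputable def adjustRule {T X : Type} (d : List T) (N : Type)
    (r : ContextFreeRule (T ⊕ VarOp X) N) :
    List (ContextFreeRule (T ⊕ VarOp X) (N × Option (ℕ × ℕ))) :=
  match r.output with
  | [Symbol.terminal (Sum.inl σ)] =>
      (List.range d.length).filterMap fun i0 =>
        if d[i0]? = some σ then
          some ⟨(r.input, some (i0 + 1, i0 + 1)), [Symbol.terminal (Sum.inl σ)]⟩
        else none
  | [Symbol.terminal (Sum.inr τ)] =>
      [⟨(r.input, none), [Symbol.terminal (Sum.inr τ)]⟩]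
  | [Symbol.nonterminal B, Symbol.nonterminal C] =>
      ⟨(r.input, none), [Symbol.nonterminal (B, none), Symbol.nonterminal (C, none)]⟩ ::
      (List.range d.length).flatMap fun i0 =>
        (List.range d.length).flatMap fun j0 =>
          if i0 ≤ j0 then
            ⟨(r.input, some (i0 + 1, j0 + 1)),
                [Symbol.nonterminal (B, some (i0 + 1, j0 + 1)), Symbol.nonterminal (C, none)]⟩ ::
            ⟨(r.input, some (i0 + 1, j0 + 1)),
                [Symbol.nonterminal (B, none), Symbol.nonterminal (C, some (i0 + 1, j0 + 1))]⟩ ::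
            ((List.range d.length).filterMap fun i' =>
              if i0 ≤ i' ∧ i' < j0 then
                some ⟨(r.input, some (i0 + 1, j0 + 1)),
                  [Symbol.nonterminal (B, some (i0 + 1, i' + 1)),
                   Symbol.nonterminal (C, some (i' + 2, j0 + 1))]⟩
              else none)
          else []
  | _ => []

open Classical in
/-- The grammar `G_d` obtained by adjusting the CNF extraction grammar `G` to the document `d`. -/
noncomputable def adjust {T X : Type} (G : ContextFreeGrammar.{0} (T ⊕ VarOp X)) (d : List T) :
    ContextFreeGrammar.{0} (T ⊕ VarOp X) where
  NT := G.NT × Option (ℕ × ℕ)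
  initial := (G.initial, some (1, d.length))
  rules := (G.rules.toList.flatMap (adjustRule d G.NT)).toFinset

/-!
A CNF grammar derives only nonempty words, so a derivation from `A` either applies a rule
`A → a`, or applies `A → BC` and splits the word into two nonempty, hence shorter, words derived
from `B` and `C`. By strong induction on `|r|`, in both directions at once, `(A, o)` derives `r`
in `G_d` iff `A` derives `r` in `G` and `clr r` is the factor of `d` named by `o`: the rules of
`G_d` over `A → a` are those whose index names `clr a`, and those over `A → BC` are those whose
indices cut the factor named by `o` into the factors named by the indices of `B` and `C`.
-/

open ContextFreeGrammar

namespace ContextFreeRule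

variable {T N : Type*} {r : ContextFreeRule T N}

lemma Rewrites.append_cases {u v w : List (Symbol T N)} (h : r.Rewrites (u ++ v) w) :
    (∃ u', r.Rewrites u u' ∧ w = u' ++ v) ∨ (∃ v', r.Rewrites v v' ∧ w = u ++ v') := by
  induction u generalizing w with
  | nil => exact Or.inr ⟨w, h, rfl⟩
  | cons x u ih =>
    cases h with
    | head s => exact Or.inl ⟨r.output ++ u, .head u, by simp⟩
    | cons _ h =>
      rcases ih h with ⟨u', hu, rfl⟩ | ⟨v', hv, rfl⟩
      · exact Or.inl ⟨x :: u', hu.cons x, rfl⟩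
      · exact Or.inr ⟨v', hv, rfl⟩

end ContextFreeRule

namespace ContextFreeGrammar

variable {T : Type*} {g : ContextFreeGrammar T}

lemma Derives.append {u u' v v' : List (Symbol T g.NT)} (hu : g.Derives u u')
    (hv : g.Derives v v') : g.Derives (u ++ v) (u' ++ v') :=
  (hu.append_right v).trans (hv.append_left u')

lemma Derives.append_split {u v w : List (Symbol T g.NT)} (h : g.Derives (u ++ v) w) :
    ∃ u' v', w = u' ++ v' ∧ g.Derives u u' ∧ g.Derives v v' := by
  generalize huv : u ++ v = s at h
  induction h using Relation.ReflTransGen.head_induction_on generalizing u v with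
  | refl => exact ⟨u, v, huv.symm, .refl u, .refl v⟩
  | head hstep _ ih =>
    obtain ⟨rl, hrl, hrw⟩ := hstep
    subst huv
    rcases hrw.append_cases with ⟨u', hu, rfl⟩ | ⟨v', hv, rfl⟩
    · obtain ⟨u'', v'', rfl, hu', hv'⟩ := ih rfl
      exact ⟨u'', v'', rfl, Produces.trans_derives ⟨rl, hrl, hu⟩ hu', hv'⟩
    · obtain ⟨u'', v'', rfl, hu', hv'⟩ := ih rfl
      exact ⟨u'', v'', rfl, hu', Produces.trans_derives ⟨rl, hrl, hv⟩ hv'⟩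

lemma Derives.eq_of_map_terminal {w : List T} {v : List (Symbol T g.NT)}
    (h : g.Derives (w.map Symbol.terminal) v) : v = w.map Symbol.terminal := by
  rcases h.eq_or_head with rfl | ⟨_, hp, -⟩
  · rfl
  · obtain ⟨rl, -, hmem⟩ := hp.exists_nonterminal_input_mem
    simp at hmem

lemma Derives.exists_rule_of_nonterminal {A : g.NT} {w : List T}
    (h : g.Derives [Symbol.nonterminal A] (w.map Symbol.terminal)) :
    ∃ rl ∈ g.rules, rl.input = A ∧ g.Derives rl.output (w.map Symbol.terminal) := by
  rcases h.eq_or_head with h | ⟨_, ⟨rl, hrl, hrw⟩, hder⟩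
  · cases w <;> simp at h
  · rw [ContextFreeRule.rewrites_iff] at hrw
    obtain ⟨p, q, hpq, rfl⟩ := hrw
    obtain ⟨rfl, rfl, rfl⟩ : p = [] ∧ A = rl.input ∧ q = [] := by
      cases p <;> simp_all
    exact ⟨rl, hrl, rfl, by simpa using hder⟩

end ContextFreeGrammar

namespace InCNF

variable {T : Type} {g : ContextFreeGrammar T}

lemma length_le_of_derives (hg : InCNF g) {u v : List (Symbol T g.NT)} (h : g.Derives u v) :
    u.length ≤ v.length := by
  induction h with
  | refl => rfl
  | tail _ hp ih =>
    obtain ⟨rl, hrl, hrw⟩ := hp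
    obtain ⟨p, q, rfl, rfl⟩ := hrw.exists_parts
    rcases hg rl hrl with ⟨B, C, ho⟩ | ⟨a, ho⟩ <;>
      simp only [ho, List.length_append, List.length_cons, List.length_nil] at ih ⊢ <;> omega

lemma ne_nil_of_derives (hg : InCNF g) {A : g.NT} {w : List T}
    (h : g.Derives [Symbol.nonterminal A] (w.map Symbol.terminal)) : w ≠ [] := by
  rintro rfl
  simpa using hg.length_le_of_derives h

lemma derives_nonterminal_iff (hg : InCNF g) {A : g.NT} {w : List T} :
    g.Derives [Symbol.nonterminal A] (w.map Symbol.terminal) ↔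
      (∃ a, ⟨A, [Symbol.terminal a]⟩ ∈ g.rules ∧ w = [a]) ∨
      ∃ B C w₁ w₂, ⟨A, [Symbol.nonterminal B, Symbol.nonterminal C]⟩ ∈ g.rules ∧
        w = w₁ ++ w₂ ∧ w₁ ≠ [] ∧ w₂ ≠ [] ∧
        g.Derives [Symbol.nonterminal B] (w₁.map Symbol.terminal) ∧
        g.Derives [Symbol.nonterminal C] (w₂.map Symbol.terminal) := by
  constructor
  · intro h
    obtain ⟨⟨_, out⟩, hrl, rfl, hder⟩ := h.exists_rule_of_nonterminal
    rcases hg _ hrl with ⟨B, C, rfl⟩ | ⟨a, rfl⟩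
    · obtain ⟨u, v, hw, hB, hC⟩ := Derives.append_split (u := [Symbol.nonterminal B]) hder
      obtain ⟨w₁, w₂, rfl, rfl, rfl⟩ := List.map_eq_append_iff.mp hw
      exact Or.inr ⟨B, C, w₁, w₂, hrl, rfl, hg.ne_nil_of_derives hB, hg.ne_nil_of_derives hC,
        hB, hC⟩
    · have hw := Derives.eq_of_map_terminal (w := [a]) hder
      exact Or.inl ⟨a, hrl, List.map_injective_iff.mpr (fun _ _ ↦ Symbol.terminal.inj) hw⟩
  · rintro (⟨a, hrl, rfl⟩ | ⟨B, C, w₁, w₂, hrl, rfl, -, -, hB, hC⟩)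
    · exact Produces.single ⟨_, hrl, .input_output⟩
    · rw [List.map_append]
      exact Produces.trans_derives ⟨_, hrl, .input_output⟩ (hB.append hC)

end InCNF

section Spells

variable {T : Type}

/-- `Spells d (some (i, j)) s` says `s = σ_i ⋯ σ_j` (1-based, `i ≤ j`) and `Spells d none s`
says `s = ε`: the possible `clr`-images of words derived from `A_{i,j}` and `A_ε`. -/
def Spells (d : List T) : Option (ℕ × ℕ) → List T → Prop
  | none, s => s = []
  | some (i, j), s => 1 ≤ i ∧ i ≤ j ∧ j ≤ d.length ∧ s = (d.drop (i - 1)).take (j - i + 1)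

/-- The index triples `(o, o₁, o₂)` for which `G_d` has the rule `A_o → B_{o₁} C_{o₂}`. -/
inductive SpanSplit (n : ℕ) : Option (ℕ × ℕ) → Option (ℕ × ℕ) → Option (ℕ × ℕ) → Prop
  | empty : SpanSplit n none none none
  | left {i j : ℕ} : 1 ≤ i → i ≤ j → j ≤ n → SpanSplit n (some (i, j)) (some (i, j)) none
  | right {i j : ℕ} : 1 ≤ i → i ≤ j → j ≤ n → SpanSplit n (some (i, j)) none (some (i, j))
  | split {i k j : ℕ} : 1 ≤ i → i ≤ k → k < j → j ≤ n →
      SpanSplit n (some (i, j)) (some (i, k)) (some (k + 1, j))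

variable {d : List T} {o : Option (ℕ × ℕ)}

lemma spells_nil_iff : Spells d o [] ↔ o = none := by
  rcases o with _ | ⟨i, j⟩
  · exact iff_of_true rfl rfl
  · refine iff_of_false ?_ (Option.some_ne_none _)
    rintro ⟨hi, hij, hj, hs⟩
    simp only [eq_comm (a := []), List.take_eq_nil_iff, List.drop_eq_nil_iff] at hs
    omega

lemma spells_singleton_iff {σ : T} :
    Spells d o [σ] ↔ ∃ i < d.length, d[i]? = some σ ∧ o = some (i + 1, i + 1) := by
  have take_one_drop (i : ℕ) : (d.drop i).take 1 = d[i]?.toList := by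
    rw [List.take_one, List.head?_drop]
  constructor
  · rcases o with _ | ⟨i, j⟩
    · simp [Spells]
    rintro ⟨hi, hij, hj, hs⟩
    obtain rfl : i = j := by
      have := congrArg List.length hs
      simp only [List.length_singleton, List.length_take, List.length_drop] at this
      omega
    rw [Nat.sub_self, zero_add, take_one_drop] at hs
    refine ⟨i - 1, by omega, ?_, by rw [Nat.sub_add_cancel hi]⟩
    cases h : d[i - 1]? <;> simp_all
  · rintro ⟨i, hi, hσ, rfl⟩
    refine ⟨by omega, le_rfl, hi, ?_⟩
    simp [take_one_drop, hσ]

lemma Spells.append {o₁ o₂ : Option (ℕ × ℕ)} {s₁ s₂ : List T}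
    (h : SpanSplit d.length o o₁ o₂) (h₁ : Spells d o₁ s₁) (h₂ : Spells d o₂ s₂) :
    Spells d o (s₁ ++ s₂) := by
  cases h with
  | empty => simp_all [Spells]
  | left => simp_all [Spells]
  | right => simp_all [Spells]
  | @split i k j hi hik hkj hj =>
    obtain ⟨-, -, -, rfl⟩ := h₁
    obtain ⟨-, -, -, rfl⟩ := h₂
    refine ⟨hi, by omega, hj, ?_⟩
    rw [show j - i + 1 = (k - i + 1) + (j - (k + 1) + 1) by omega, List.take_add (i := k - i + 1),
      List.drop_drop, show i - 1 + (k - i + 1) = k + 1 - 1 by omega]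

lemma Spells.exists_spanSplit {s₁ s₂ : List T} (h : Spells d o (s₁ ++ s₂)) :
    ∃ o₁ o₂, SpanSplit d.length o o₁ o₂ ∧ Spells d o₁ s₁ ∧ Spells d o₂ s₂ := by
  rcases o with _ | ⟨i, j⟩
  · obtain ⟨rfl, rfl⟩ := List.append_eq_nil_iff.mp h
    exact ⟨none, none, .empty, rfl, rfl⟩
  obtain ⟨hi, hij, hj, hs⟩ := h
  have hlen : s₁.length + s₂.length = j - i + 1 := by
    rw [← List.length_append, hs, List.length_take, List.length_drop]
    omega
  by_cases h₁ : s₁ = []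
  · subst h₁
    exact ⟨none, some (i, j), .right hi hij hj, rfl, hi, hij, hj, hs⟩
  by_cases h₂ : s₂ = []
  · subst h₂
    exact ⟨some (i, j), none, .left hi hij hj, ⟨hi, hij, hj, by simpa using hs⟩, rfl⟩
  rw [← hlen, List.take_add, List.drop_drop] at hs
  obtain ⟨hs₁, hs₂⟩ := List.append_inj hs (by rw [List.length_take, List.length_drop]; omega)
  have := List.length_pos_iff.mpr h₁
  have := List.length_pos_iff.mpr h₂
  refine ⟨some (i, i - 1 + s₁.length), some (i - 1 + s₁.length + 1, j),
    .split hi (by omega) (by omega) hj, ⟨hi, by omega, by omega, ?_⟩, ⟨by omega, by omega, hj, ?_⟩⟩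
  · rwa [show i - 1 + s₁.length - i + 1 = s₁.length by omega]
  · rwa [show i - 1 + s₁.length + 1 - 1 = i - 1 + s₁.length by omega,
      show j - (i - 1 + s₁.length + 1) + 1 = s₂.length by omega]

end Spells

section Adjust

variable {T X : Type} {G : ContextFreeGrammar.{0} (T ⊕ VarOp X)} {d : List T}

lemma clr_append (r₁ r₂ : RefWord T X) : clr (r₁ ++ r₂) = clr r₁ ++ clr r₂ :=
  List.filterMap_append

lemma mem_adjust_rules {r' : ContextFreeRule (T ⊕ VarOp X) (G.NT × Option (ℕ × ℕ))} :
    r' ∈ (adjust G d).rules ↔ ∃ r ∈ G.rules, r' ∈ adjustRule d G.NT r := by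
  classical
  show _ ∈ List.toFinset _ ↔ _
  simp [List.mem_toFinset]

lemma inCNF_adjust : InCNF (adjust G d) := by
  intro (r' : ContextFreeRule (T ⊕ VarOp X) (G.NT × Option (ℕ × ℕ))) hr'
  obtain ⟨r, -, hmem⟩ := mem_adjust_rules.mp hr'
  unfold adjustRule at hmem
  split at hmem <;> simp only [List.mem_cons, List.not_mem_nil, List.mem_range, List.mem_filterMap, List.mem_flatMap,
      List.mem_ite_nil_right, Option.ite_none_right_eq_some, Option.some.injEq, or_false] at hmem
  · obtain ⟨_, _, _, rfl⟩ := hmem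
    exact .inr ⟨_, rfl⟩
  · exact .inr ⟨_, congrArg ContextFreeRule.output hmem⟩
  · rcases hmem with rfl | ⟨_, _, _, _, _, rfl | rfl | ⟨_, _, _, rfl⟩⟩ <;> exact .inl ⟨_, _, rfl⟩

lemma terminal_mem_adjust_rules_iff {A : G.NT} {o : Option (ℕ × ℕ)} {a : T ⊕ VarOp X} :
    (⟨(A, o), [Symbol.terminal a]⟩ : ContextFreeRule _ (G.NT × Option (ℕ × ℕ))) ∈
        (adjust G d).rules ↔
      ⟨A, [Symbol.terminal a]⟩ ∈ G.rules ∧ Spells d o (clr [a]) := by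
  rw [mem_adjust_rules]
  constructor
  · rintro ⟨⟨B, out⟩, hr, hmem⟩
    unfold adjustRule at hmem
    split at hmem <;>
      simp only [List.mem_cons, List.not_mem_nil, List.mem_range, List.mem_filterMap, List.mem_flatMap,
      List.mem_ite_nil_right, Option.ite_none_right_eq_some, Option.some.injEq,
      ContextFreeRule.mk.injEq, Prod.mk.injEq, List.cons.injEq, reduceCtorEq, and_true, and_false,
      and_self, or_false, or_self, exists_const, List.ne_cons_self, List.cons_ne_self, Symbol.terminal.injEq] at hmem
    next σ hout =>
      obtain ⟨i, hi, hσ, ⟨rfl, rfl⟩, rfl⟩ := hmem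
      subst hout
      exact ⟨hr, spells_singleton_iff.mpr ⟨i, hi, hσ, rfl⟩⟩
    next τ hout =>
      obtain ⟨⟨rfl, rfl⟩, rfl⟩ := hmem
      subst hout
      exact ⟨hr, rfl⟩
  · rintro ⟨hr, hs⟩
    refine ⟨_, hr, ?_⟩
    rcases a with σ | τ
    · obtain ⟨i, hi, hσ, rfl⟩ := spells_singleton_iff.mp hs
      simpa [adjustRule] using ⟨hi, hσ⟩
    · obtain rfl := spells_nil_iff.mp hs
      simp [adjustRule]

lemma binary_mem_adjust_rules_iff {A B C : G.NT} {o o₁ o₂ : Option (ℕ × ℕ)} :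
    (⟨(A, o), [Symbol.nonterminal (B, o₁), Symbol.nonterminal (C, o₂)]⟩ :
        ContextFreeRule _ (G.NT × Option (ℕ × ℕ))) ∈ (adjust G d).rules ↔
      ⟨A, [Symbol.nonterminal B, Symbol.nonterminal C]⟩ ∈ G.rules ∧
        SpanSplit d.length o o₁ o₂ := by
  rw [mem_adjust_rules]
  constructor
  · rintro ⟨⟨A', out⟩, hr, hmem⟩
    unfold adjustRule at hmem
    split at hmem <;>
      simp only [List.mem_cons, List.not_mem_nil, List.mem_range, List.mem_filterMap, List.mem_flatMap,
      List.mem_ite_nil_right, Option.ite_none_right_eq_some, Option.some.injEq,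
      ContextFreeRule.mk.injEq, Prod.mk.injEq, List.cons.injEq, reduceCtorEq, and_true, and_false,
      and_self, or_self, exists_const, List.ne_cons_self, List.cons_ne_self, Symbol.nonterminal.injEq] at hmem
    next B' C' hout =>
      subst hout
      rcases hmem with ⟨⟨rfl, rfl⟩, ⟨rfl, rfl⟩, rfl, rfl⟩ |
        ⟨i, -, j, hj, hij, ⟨⟨rfl, rfl⟩, ⟨rfl, rfl⟩, rfl, rfl⟩ | ⟨⟨rfl, rfl⟩, ⟨rfl, rfl⟩, rfl, rfl⟩ |
          ⟨k, -, ⟨hik, hkj⟩, ⟨rfl, rfl⟩, ⟨rfl, rfl⟩, rfl, rfl⟩⟩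
      · exact ⟨hr, .empty⟩
      · exact ⟨hr, .left (by omega) (by omega) (by omega)⟩
      · exact ⟨hr, .right (by omega) (by omega) (by omega)⟩
      · exact ⟨hr, .split (by omega) (by omega) (by omega) (by omega)⟩
  · rintro ⟨hr, hsplit⟩
    refine ⟨_, hr, ?_⟩
    cases hsplit with
    | empty => simp [adjustRule]
    | @left i j hi hij hj =>
      simpa [adjustRule] using ⟨i - 1, by omega, j - 1, by omega, by omega, by omega, by omega⟩
    | @right i j hi hij hj =>
      simpa [adjustRule] using ⟨i - 1, by omega, j - 1, by omega, by omega, by omega, by omega⟩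
    | @split i k j hi hik hkj hj =>
      simpa [adjustRule] using ⟨i - 1, by omega, j - 1, by omega, by omega, k - 1, by omega,
        ⟨by omega, by omega⟩, ⟨by omega, by omega⟩, ⟨by omega, by omega⟩, by omega, by omega⟩

theorem adjust_derives_iff (hG : InCNF G) {A : G.NT} {o : Option (ℕ × ℕ)} {r : RefWord T X} :
    (adjust G d).Derives [Symbol.nonterminal (A, o)] (r.map Symbol.terminal) ↔
      G.Derives [Symbol.nonterminal A] (r.map Symbol.terminal) ∧ Spells d o (clr r) := by
  rw [hG.derives_nonterminal_iff]
  refine (inCNF_adjust.derives_nonterminal_iff (A := (A, o))).trans ⟨?_, ?_⟩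
  · rintro (⟨a, hrule, rfl⟩ | ⟨⟨B, o₁⟩, ⟨C, o₂⟩, r₁, r₂, hrule, rfl, hne₁, hne₂, hB, hC⟩)
    · obtain ⟨hrule, hs⟩ := terminal_mem_adjust_rules_iff.mp hrule
      exact ⟨.inl ⟨a, hrule, rfl⟩, hs⟩
    · obtain ⟨hrule, hsplit⟩ := binary_mem_adjust_rules_iff.mp hrule
      obtain ⟨hB, hs₁⟩ := (adjust_derives_iff hG).mp hB
      obtain ⟨hC, hs₂⟩ := (adjust_derives_iff hG).mp hC
      refine ⟨.inr ⟨B, C, r₁, r₂, hrule, rfl, hne₁, hne₂, hB, hC⟩, ?_⟩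
      rw [clr_append]
      exact hs₁.append hsplit hs₂
  · rintro ⟨⟨a, hrule, rfl⟩ | ⟨B, C, r₁, r₂, hrule, rfl, hne₁, hne₂, hB, hC⟩, hs⟩
    · exact .inl ⟨a, terminal_mem_adjust_rules_iff.mpr ⟨hrule, hs⟩, rfl⟩
    · rw [clr_append] at hs
      obtain ⟨o₁, o₂, hsplit, hs₁, hs₂⟩ := hs.exists_spanSplit
      exact .inr ⟨(B, o₁), (C, o₂), r₁, r₂, binary_mem_adjust_rules_iff.mpr ⟨hrule, hsplit⟩, rfl,
        hne₁, hne₂, (adjust_derives_iff hG).mpr ⟨hB, hs₁⟩, (adjust_derives_iff hG).mpr ⟨hC, hs₂⟩⟩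
termination_by r.length
decreasing_by
  all_goals
    subst_vars
    have := List.length_pos_iff.mpr ‹r₁ ≠ []›
    have := List.length_pos_iff.mpr ‹r₂ ≠ []›
    simp only [List.length_append]
    omega

end Adjust

/-- Correctness of the document adjustment: for `1 ≤ i ≤ j ≤ |d|` and every ref-word `r` with
`clr r = σ_i ⋯ σ_j`, `A ⇒*_G r` iff `A_{i,j} ⇒*_{G_d} r`. -/
theorem stmt14 (T X : Type) (G : ContextFreeGrammar.{0} (T ⊕ VarOp X)) (hCNF : InCNF G)
    (d : List T) (A : G.NT) (i j : ℕ) (h1 : 1 ≤ i) (hij : i ≤ j) (hj : j ≤ d.length)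
    (r : RefWord T X) (hr : clr r = (d.drop (i - 1)).take (j - i + 1)) :
    G.Derives [Symbol.nonterminal A] (r.map Symbol.terminal) ↔
    (adjust G d).Derives [Symbol.nonterminal (A, some (i, j))] (r.map Symbol.terminal) := by
  rw [adjust_derives_iff hCNF]
  exact (and_iff_left ⟨h1, hij, hj, hr⟩).symm
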